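/- Fix q ≥ 2 with Hölder conjugate q*, and vectors μ, μ' ∈ R^n with ‖μ − μ'‖_q ≤ τ. Let μ̂ be any vector satisfying ‖μ̂ − μ'‖_q ≤ τ and ‖μ̂‖_{q*} ≤ ‖μ‖_{q*} (e.g., the minimizer of ‖·‖_{q*} over the ℓ_q-ball of radius τ around μ'). Then ‖μ̂ − μ‖_2² ≤ 4·min{ τ·‖μ‖_{q*}, n^{1−1/q}·τ² }. -/

import Mathlib

/-! Both bounds come from `‖x‖₂² ≤ ‖x‖_q ‖x‖_{q*}` (Hölder) and `‖x‖₂² ≤ n^{1-2/q} ‖x‖_q²`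
(Hölder against the constant weight) applied to `x = μ̂ - μ`, together with the triangle
inequalities `‖μ̂ - μ‖_q ≤ ‖μ̂ - μ'‖_q + ‖μ' - μ‖_q ≤ 2τ` and
`‖μ̂ - μ‖_{q*} ≤ ‖μ̂‖_{q*} + ‖μ‖_{q*} ≤ 2‖μ‖_{q*}`. -/

noncomputable def lpNorm {n : ℕ} (p : ℝ) (v : Fin n → ℝ) : ℝ :=
  (∑ i, |v i| ^ p) ^ (1 / p)

section lpNorm

variable {n : ℕ}

lemma lpNorm_nonneg (p : ℝ) (v : Fin n → ℝ) : 0 ≤ lpNorm p v := by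
  unfold lpNorm; positivity

lemma lpNorm_neg (p : ℝ) (v : Fin n → ℝ) : lpNorm p (-v) = lpNorm p v := by
  simp [lpNorm]

lemma lpNorm_sub_comm (p : ℝ) (u v : Fin n → ℝ) : lpNorm p (u - v) = lpNorm p (v - u) := by
  rw [← neg_sub, lpNorm_neg]

lemma lpNorm_add_le {p : ℝ} (hp : 1 ≤ p) (u v : Fin n → ℝ) :
    lpNorm p (u + v) ≤ lpNorm p u + lpNorm p v :=
  Real.Lp_add_le Finset.univ u v hp

lemma lpNorm_sub_le_add {p : ℝ} (hp : 1 ≤ p) (u v : Fin n → ℝ) :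
    lpNorm p (u - v) ≤ lpNorm p u + lpNorm p v := by
  simpa only [sub_eq_add_neg, lpNorm_neg] using lpNorm_add_le hp u (-v)

lemma lpNorm_sub_le {p : ℝ} (hp : 1 ≤ p) (u v w : Fin n → ℝ) :
    lpNorm p (u - w) ≤ lpNorm p (u - v) + lpNorm p (v - w) := by
  simpa only [sub_add_sub_cancel] using lpNorm_add_le hp (u - v) (v - w)

lemma lpNorm_two_sq (v : Fin n → ℝ) : lpNorm 2 v ^ 2 = ∑ i, v i ^ 2 := by
  have hsum : ∑ i, |v i| ^ (2 : ℝ) = ∑ i, v i ^ 2 := by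
    simp only [Real.rpow_two, sq_abs]
  rw [lpNorm, hsum, ← Real.sqrt_eq_rpow, Real.sq_sqrt (by positivity)]

lemma rpow_sum_abs_rpow_eq_lpNorm_sq {q : ℝ} (hq : q ≠ 0) (v : Fin n → ℝ) :
    (∑ i, |v i| ^ q) ^ (2 / q) = lpNorm q v ^ 2 := by
  rw [lpNorm, ← Real.rpow_natCast, ← Real.rpow_mul (by positivity)]
  congr 1
  field_simp
  norm_num

lemma lpNorm_two_sq_le_lpNorm_mul_lpNorm {p q : ℝ} (hpq : p.HolderConjugate q)
    (v : Fin n → ℝ) : lpNorm 2 v ^ 2 ≤ lpNorm p v * lpNorm q v := by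
  rw [lpNorm_two_sq]
  simp only [sq]
  exact Real.inner_le_Lp_mul_Lq Finset.univ v v hpq

lemma lpNorm_two_sq_le_card_rpow_mul_lpNorm_sq {q : ℝ} (hq : 2 ≤ q) (v : Fin n → ℝ) :
    lpNorm 2 v ^ 2 ≤ (n : ℝ) ^ (1 - 2 / q) * lpNorm q v ^ 2 := by
  have hholder := Real.inner_le_weight_mul_Lp_of_nonneg Finset.univ (p := q / 2) (by linarith)
    (fun _ => 1) (fun i => v i ^ 2) (fun _ => zero_le_one) (fun i => sq_nonneg (v i))
  have hpow : ∀ i, (v i ^ 2) ^ (q / 2) = |v i| ^ q := fun i => by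
    rw [← sq_abs, ← Real.rpow_natCast, ← Real.rpow_mul (abs_nonneg _)]
    push_cast
    congr 1
    field_simp
  simp only [one_mul, hpow, Finset.sum_const, Finset.card_univ, Fintype.card_fin,
    nsmul_eq_mul, mul_one, inv_div] at hholder
  rw [lpNorm_two_sq, ← rpow_sum_abs_rpow_eq_lpNorm_sq (by linarith)]
  convert hholder using 3

lemma lpNorm_two_sq_le_card_rpow_mul_lpNorm_sq' {q : ℝ} (hq : 2 ≤ q) (v : Fin n → ℝ) :
    lpNorm 2 v ^ 2 ≤ (n : ℝ) ^ (1 - 1 / q) * lpNorm q v ^ 2 := by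
  rcases Nat.eq_zero_or_pos n with rfl | hn
  · rw [lpNorm_two_sq, Finset.univ_eq_empty, Finset.sum_empty]
    positivity
  refine (lpNorm_two_sq_le_card_rpow_mul_lpNorm_sq hq v).trans ?_
  gcongr
  · exact_mod_cast hn
  · linarith [div_le_div_of_nonneg_right (by norm_num : (1 : ℝ) ≤ 2) (by linarith : 0 ≤ q)]

end lpNorm

theorem stmt19 {n : ℕ} (q qs τ : ℝ) (hq : 2 ≤ q) (hconj : 1 / q + 1 / qs = 1)
    (μ μ' μhat : Fin n → ℝ)
    (h1 : lpNorm q (μ - μ') ≤ τ)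
    (h2 : lpNorm q (μhat - μ') ≤ τ)
    (h3 : lpNorm qs μhat ≤ lpNorm qs μ) :
    lpNorm 2 (μhat - μ) ^ 2 ≤ 4 * min (τ * lpNorm qs μ) ((n : ℝ) ^ (1 - 1 / q) * τ ^ 2) := by
  have hpq : q.HolderConjugate qs :=
    Real.holderConjugate_iff.mpr ⟨by linarith, by simpa only [one_div] using hconj⟩
  have hq_le : lpNorm q (μhat - μ) ≤ 2 * τ := by
    have := lpNorm_sub_le hpq.lt.le μhat μ' μ
    rw [lpNorm_sub_comm q μ'] at this
    linarith
  have hqs_le : lpNorm qs (μhat - μ) ≤ 2 * lpNorm qs μ := by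
    linarith [lpNorm_sub_le_add hpq.symm.lt.le μhat μ]
  rw [mul_min_of_nonneg _ _ (by norm_num : (0 : ℝ) ≤ 4)]
  refine le_min ?_ ?_
  · calc lpNorm 2 (μhat - μ) ^ 2 ≤ lpNorm q (μhat - μ) * lpNorm qs (μhat - μ) :=
          lpNorm_two_sq_le_lpNorm_mul_lpNorm hpq _
      _ ≤ (2 * τ) * (2 * lpNorm qs μ) :=
          mul_le_mul hq_le hqs_le (lpNorm_nonneg _ _) (by linarith [lpNorm_nonneg q (μhat - μ)])
      _ = 4 * (τ * lpNorm qs μ) := by ring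
  · calc lpNorm 2 (μhat - μ) ^ 2 ≤ (n : ℝ) ^ (1 - 1 / q) * lpNorm q (μhat - μ) ^ 2 :=
          lpNorm_two_sq_le_card_rpow_mul_lpNorm_sq' hq _
      _ ≤ (n : ℝ) ^ (1 - 1 / q) * (2 * τ) ^ 2 := by
          gcongr
          exact lpNorm_nonneg _ _
      _ = 4 * ((n : ℝ) ^ (1 - 1 / q) * τ ^ 2) := by ring
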